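/- arXiv:2010.09133 — 5 statements merged into one kernel-verified Lean document; each statement's English description precedes it below -/
import Mathlib

section
/- Let c_1, ..., c_d be strictly positive real numbers and define h(A) = Σ_{p=1}^d c_p · tr(A^p) for nonnegative d×d matrices A. Then a directed graph G with weighted adjacency matrix A is acyclic if and only if h(A) = 0. -/
/-- `h(A) = Σ_{p=1}^d c_p tr(A^p)`. -/
noncomputable def hsum {d : ℕ} (c : ℕ → ℝ) (A : Matrix (Fin d) (Fin d) ℝ) : ℝ :=
  ∑ p ∈ Finset.Icc 1 d, c p * (A ^ p).trace

/-- A directed walk of length `p` in the graph given by edge relation `E`. -/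
def RelWalk {d : ℕ} (E : Fin d → Fin d → Prop) (p : ℕ) (w : ℕ → Fin d) : Prop :=
  ∀ k < p, E (w k) (w (k + 1))

/-- A directed graph is acyclic if it has no directed cycle. -/
def RelAcyclic {d : ℕ} (E : Fin d → Fin d → Prop) : Prop :=
  ¬ ∃ (p : ℕ) (w : ℕ → Fin d), 0 < p ∧ RelWalk E p w ∧ w 0 = w p

lemma pow_entry_nonneg {d : ℕ} {A : Matrix (Fin d) (Fin d) ℝ}
    (hA : ∀ i j, 0 ≤ A i j) : ∀ p i j, 0 ≤ (A ^ p) i j := by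
  intro p
  induction p with
  | zero =>
    intro i j
    simp [Matrix.one_apply]
    split <;> norm_num
  | succ p ih =>
    intro i j
    rw [pow_succ, Matrix.mul_apply]
    exact Finset.sum_nonneg fun k _ => mul_nonneg (ih i k) (hA k j)

lemma pos_of_walk {d : ℕ} {A : Matrix (Fin d) (Fin d) ℝ} {E : Fin d → Fin d → Prop}
    (hA : ∀ i j, 0 ≤ A i j) (hE : ∀ i j, E i j ↔ 0 < A i j) :
    ∀ p (w : ℕ → Fin d), RelWalk E p w → 0 < (A ^ p) (w 0) (w p) := by
  intro p
  induction p with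
  | zero =>
    intro w _
    simp [Matrix.one_apply]
  | succ p ih =>
    intro w hw
    have h1 : 0 < (A ^ p) (w 0) (w p) := ih w (fun k hk => hw k (Nat.lt_succ_of_lt hk))
    have h2 : 0 < A (w p) (w (p + 1)) := (hE _ _).1 (hw p (Nat.lt_succ_self p))
    rw [pow_succ, Matrix.mul_apply]
    refine Finset.sum_pos' (fun k _ => mul_nonneg (pow_entry_nonneg hA p _ _) (hA _ _)) ?_
    exact ⟨w p, Finset.mem_univ _, mul_pos h1 h2⟩

lemma walk_of_pos {d : ℕ} {A : Matrix (Fin d) (Fin d) ℝ} {E : Fin d → Fin d → Prop}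
    (hA : ∀ i j, 0 ≤ A i j) (hE : ∀ i j, E i j ↔ 0 < A i j) :
    ∀ p i j, 0 < (A ^ p) i j → ∃ w : ℕ → Fin d, RelWalk E p w ∧ w 0 = i ∧ w p = j := by
  intro p
  induction p with
  | zero =>
    intro i j h
    rw [pow_zero, Matrix.one_apply] at h
    by_cases hij : i = j
    · exact ⟨fun _ => i, fun k hk => absurd hk (Nat.not_lt_zero k), rfl, hij⟩
    · simp [hij] at h
  | succ p ih =>
    intro i j h
    rw [pow_succ, Matrix.mul_apply] at h
    have : ∃ k, 0 < (A ^ p) i k * A k j := by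
      by_contra hcon
      push_neg at hcon
      have : ∑ k, (A ^ p) i k * A k j = 0 :=
        le_antisymm (Finset.sum_nonpos fun k _ => hcon k)
          (Finset.sum_nonneg fun k _ => mul_nonneg (pow_entry_nonneg hA p _ _) (hA _ _))
      rw [this] at h
      exact lt_irrefl 0 h
    obtain ⟨k, hk⟩ := this
    have h1 : 0 < (A ^ p) i k := by
      rcases mul_pos_iff.1 hk with ⟨ha, _⟩ | ⟨_, hb⟩
      · exact ha
      · exact absurd hb (not_lt.2 (hA k j))
    have h2 : 0 < A k j := by
      rcases mul_pos_iff.1 hk with ⟨_, hb⟩ | ⟨ha, _⟩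
      · exact hb
      · exact absurd ha (not_lt.2 (pow_entry_nonneg hA p i k))
    obtain ⟨w, hw, hw0, hwp⟩ := ih i k h1
    refine ⟨fun m => if m ≤ p then w m else j, ?_, ?_, ?_⟩
    · intro m hm
      show E (if m ≤ p then w m else j) (if m + 1 ≤ p then w (m + 1) else j)
      rcases Nat.lt_succ_iff_lt_or_eq.1 hm with hm | hm
      · rw [if_pos (Nat.le_of_lt hm), if_pos (Nat.succ_le_of_lt hm)]
        exact hw m hm
      · subst hm
        rw [if_pos le_rfl, if_neg (by omega), hwp]
        exact (hE k j).2 h2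
    · simpa using hw0
    · simp

theorem stmt3 {d : ℕ} (c : ℕ → ℝ) (hc : ∀ p ∈ Finset.Icc 1 d, 0 < c p)
    (A : Matrix (Fin d) (Fin d) ℝ) (E : Fin d → Fin d → Prop)
    (hA : ∀ i j, 0 ≤ A i j) (hE : ∀ i j, E i j ↔ 0 < A i j) :
    RelAcyclic E ↔ hsum c A = 0 := by
  constructor
  · intro hac
    unfold hsum
    refine Finset.sum_eq_zero fun p hp => ?_
    have hp1 : 0 < p := (Finset.mem_Icc.1 hp).1
    have htr : (A ^ p).trace = 0 := by
      unfold Matrix.trace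
      refine Finset.sum_eq_zero fun i _ => ?_
      by_contra hne
      have hpos : 0 < (A ^ p) i i :=
        lt_of_le_of_ne (pow_entry_nonneg hA p i i) (Ne.symm hne)
      obtain ⟨w, hw, hw0, hwp⟩ := walk_of_pos hA hE p i i hpos
      exact hac ⟨p, w, hp1, hw, hw0.trans hwp.symm⟩
    simp [Matrix.diag, htr]
  · intro hz
    rintro ⟨p, w, hp, hw, hcyc⟩
    -- reduce to a cycle of length q ∈ [1, d]
    obtain ⟨q, v, hq1, hqd, hvv⟩ :
        ∃ (q : ℕ) (v : Fin d), 1 ≤ q ∧ q ≤ d ∧ 0 < (A ^ q) v v := by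
      have key : ∀ x y : ℕ, x < y → y ≤ d → y ≤ p → w x = w y →
          ∃ (q : ℕ) (v : Fin d), 1 ≤ q ∧ q ≤ d ∧ 0 < (A ^ q) v v := by
        intro x y hxy hyd hyp hwxy
        refine ⟨y - x, w x, by omega, by omega, ?_⟩
        have hwalk : RelWalk E (y - x) (fun m => w (x + m)) := by
          intro k hk
          show E (w (x + k)) (w (x + (k + 1)))
          rw [show x + (k + 1) = (x + k) + 1 from rfl]
          exact hw (x + k) (by omega)
        have hpos := pos_of_walk hA hE (y - x) (fun m => w (x + m)) hwalk
        rw [show x + 0 = x from rfl, show x + (y - x) = y from by omega] at hpos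
        rwa [← hwxy] at hpos
      by_cases hpd : p ≤ d
      · refine ⟨p, w 0, hp, hpd, ?_⟩
        have := pos_of_walk hA hE p w hw
        rwa [← hcyc] at this
      · push_neg at hpd
        have hninj : ¬ Function.Injective (fun m : Fin (d + 1) => w m) := by
          intro hinj
          have := Fintype.card_le_of_injective _ hinj
          simp at this
        rw [Function.not_injective_iff] at hninj
        obtain ⟨a, b, hab, hne⟩ := hninj
        have hne' : (a : ℕ) ≠ b := fun h => hne (Fin.ext h)
        have ha := a.isLt
        have hb := b.isLt
        rcases Nat.lt_or_ge (a : ℕ) b with hlt | hge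
        · exact key a b hlt (by omega) (by omega) hab
        · exact key b a (by omega) (by omega) (by omega) hab.symm
    -- from hsum = 0, trace of A^q is zero, contradiction
    have hterm : ∀ r ∈ Finset.Icc 1 d, 0 ≤ c r * (A ^ r).trace := by
      intro r hr
      refine mul_nonneg (le_of_lt (hc r hr)) ?_
      exact Finset.sum_nonneg fun i _ => pow_entry_nonneg hA r i i
    have hq : q ∈ Finset.Icc 1 d := Finset.mem_Icc.2 ⟨hq1, hqd⟩
    have hz' := (Finset.sum_eq_zero_iff_of_nonneg hterm).1 hz q hq
    have htr0 : (A ^ q).trace = 0 := by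
      rcases mul_eq_zero.1 hz' with h | h
      · exact absurd h (ne_of_gt (hc q hq))
      · exact h
    have : 0 < (A ^ q).trace := by
      unfold Matrix.trace
      exact Finset.sum_pos' (fun i _ => pow_entry_nonneg hA q i i)
        ⟨v, Finset.mem_univ v, hvv⟩
    rw [htr0] at this
    exact lt_irrefl 0 this
end

section
/- A directed graph with nonnegative weighted adjacency matrix A is acyclic if and only if the Hadamard (entrywise) product A ∘ ∇h(A) is the zero matrix, where ∇h(A) = Σ_{p=1}^d p c_p (A^{p-1})^T with c_p > 0. -/
open Matrix

/-- The gradient `∇h(A) = Σ_{p=1}^d p c_p (A^{p-1})ᵀ`. -/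
noncomputable def gradh {d : ℕ} (c : ℕ → ℝ) (A : Matrix (Fin d) (Fin d) ℝ) :
    Matrix (Fin d) (Fin d) ℝ :=
  ∑ p ∈ Finset.Icc 1 d, ((p : ℝ) * c p) • (A ^ (p - 1))ᵀ

/-- A directed walk in the graph with edge `(i,j)` iff `A i j > 0`. -/
def IsWalkA {d : ℕ} (A : Matrix (Fin d) (Fin d) ℝ) (p : ℕ) (w : ℕ → Fin d) : Prop :=
  ∀ k < p, 0 < A (w k) (w (k + 1))

/-- The graph of `A` is acyclic. -/
def AcyclicA {d : ℕ} (A : Matrix (Fin d) (Fin d) ℝ) : Prop :=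
  ¬ ∃ (p : ℕ) (w : ℕ → Fin d), 0 < p ∧ IsWalkA A p w ∧ w 0 = w p

/-!
Entrywise, `(A ∘ ∇h(A))ᵢⱼ = Σₚ p cₚ · Aᵢⱼ (A^{p-1})ⱼᵢ` is a sum of nonnegative terms, and summing
`Aᵢⱼ (A^{p-1})ⱼᵢ` over `j` gives `(A^p)ᵢᵢ`. Hence the Hadamard product vanishes iff the diagonal
of `A^p` vanishes for `1 ≤ p ≤ d`, i.e. iff there is no closed walk of length at most `d`.
A positive entry of a power of a nonnegative matrix is exactly a walk, and by pigeonhole any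
closed walk contains one of length at most `d`.
-/

open Finset

lemma exists_lt_le_card_map_eq {α : Type*} [Fintype α] (w : ℕ → α) :
    ∃ a b, a < b ∧ b ≤ Fintype.card α ∧ w a = w b := by
  obtain ⟨x, y, hxy, hw⟩ := Fintype.exists_ne_map_eq_of_card_lt
    (fun m : Fin (Fintype.card α + 1) => w m) (by simp)
  rcases Fin.lt_or_lt_of_ne hxy with h | h
  · exact ⟨x, y, h, Nat.lt_succ_iff.mp y.isLt, hw⟩
  · exact ⟨y, x, h, Nat.lt_succ_iff.mp x.isLt, hw.symm⟩

lemma Matrix.pow_apply_eq_sum_mul_pow_pred {n R : Type*} [Fintype n] [DecidableEq n] [Semiring R]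
    (M : Matrix n n R) {p : ℕ} (hp : 1 ≤ p) (i k : n) :
    (M ^ p) i k = ∑ j, M i j * (M ^ (p - 1)) j k := by
  rw [← Nat.sub_add_cancel hp, pow_succ', Matrix.mul_apply, Nat.add_sub_cancel]

section

variable {d : ℕ} {A : Matrix (Fin d) (Fin d) ℝ}

lemma IsWalkA.shift {p : ℕ} {w : ℕ → Fin d} (hw : IsWalkA A p w) {a q : ℕ} (h : a + q ≤ p) :
    IsWalkA A q (fun k => w (a + k)) :=
  fun k hk => by simpa only [add_assoc] using hw (a + k) (by omega)

lemma IsWalkA.exists_closed_length_le {p : ℕ} {w : ℕ → Fin d} (hw : IsWalkA A p w) (hp : 0 < p)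
    (hcyc : w 0 = w p) : ∃ q ∈ Icc 1 d, ∃ v, IsWalkA A q v ∧ v 0 = v q := by
  by_cases hpd : p ≤ d
  · exact ⟨p, mem_Icc.2 ⟨hp, hpd⟩, w, hw, hcyc⟩
  obtain ⟨a, b, hab, hbd, hwab⟩ := exists_lt_le_card_map_eq w
  rw [Fintype.card_fin] at hbd
  refine ⟨b - a, mem_Icc.2 ⟨by omega, by omega⟩, fun k => w (a + k), hw.shift (by omega), ?_⟩
  simpa [Nat.add_sub_cancel' hab.le] using hwab

lemma pow_apply_pos_iff_exists_walk (hA : ∀ i j, 0 ≤ A i j) (n : ℕ) (i j : Fin d) :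
    0 < (A ^ n) i j ↔ ∃ w, w 0 = i ∧ w n = j ∧ IsWalkA A n w := by
  induction n generalizing j with
  | zero =>
    constructor
    · intro h
      obtain rfl : i = j := by by_contra hij; simp [hij] at h
      exact ⟨fun _ => i, rfl, rfl, fun k hk => absurd hk (Nat.not_lt_zero k)⟩
    · rintro ⟨w, rfl, rfl, -⟩
      simp
  | succ n ih =>
    rw [pow_succ, Matrix.mul_apply, sum_pos_iff_of_nonneg
      fun k _ => mul_nonneg (Matrix.pow_apply_nonneg hA n i k) (hA k j)]
    constructor
    · rintro ⟨k, -, hk⟩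
      obtain ⟨w, hw0, hwn, hw⟩ := (ih k).1 (pos_of_mul_pos_left hk (hA k j))
      refine ⟨Function.update w (n + 1) j, by simp [hw0], by simp, fun m hm => ?_⟩
      rcases Nat.lt_succ_iff_lt_or_eq.1 hm with hm | rfl
      · simpa [Function.update_apply, show m ≠ n + 1 by omega, show m ≠ n by omega]
          using hw m hm
      · simpa [Function.update_apply, hwn] using
          pos_of_mul_pos_right hk (Matrix.pow_apply_nonneg hA _ i k)
    · rintro ⟨w, hw0, rfl, hw⟩
      exact ⟨w n, mem_univ _, mul_pos ((ih (w n)).2 ⟨w, hw0, rfl, fun k hk => hw k (by omega)⟩)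
        (hw n n.lt_succ_self)⟩

lemma acyclicA_iff_diag_pow_eq_zero (hA : ∀ i j, 0 ≤ A i j) :
    AcyclicA A ↔ ∀ p ∈ Icc 1 d, (A ^ p).diag = 0 := by
  constructor
  · intro hac p hp
    funext i
    by_contra hne
    have hpos := (Matrix.pow_apply_nonneg hA p i i).lt_of_ne' hne
    obtain ⟨w, hw0, hwp, hw⟩ := (pow_apply_pos_iff_exists_walk hA p i i).1 hpos
    exact hac ⟨p, w, (mem_Icc.1 hp).1, hw, hw0.trans hwp.symm⟩
  · rintro h ⟨p, w, hp, hw, hcyc⟩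
    obtain ⟨q, hq, v, hv, hvq⟩ := hw.exists_closed_length_le hp hcyc
    have hpos := (pow_apply_pos_iff_exists_walk hA q (v 0) (v 0)).2 ⟨v, rfl, hvq.symm, hv⟩
    exact hpos.ne' (congrFun (h q hq) (v 0))

lemma hadamard_gradh_apply (c : ℕ → ℝ) (i j : Fin d) :
    hadamard A (gradh c A) i j = ∑ p ∈ Icc 1 d, (p * c p) * (A i j * (A ^ (p - 1)) j i) := by
  simp only [hadamard_apply, gradh, Matrix.sum_apply, Matrix.smul_apply, Matrix.transpose_apply,
    smul_eq_mul, mul_sum]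
  exact sum_congr rfl fun p _ => mul_left_comm _ _ _

lemma hadamard_gradh_eq_zero_iff_diag_pow_eq_zero {c : ℕ → ℝ} (hc : ∀ p ∈ Icc 1 d, 0 < c p)
    (hA : ∀ i j, 0 ≤ A i j) :
    hadamard A (gradh c A) = 0 ↔ ∀ p ∈ Icc 1 d, (A ^ p).diag = 0 := by
  have hterm : ∀ p i j, 0 ≤ A i j * (A ^ p) j i :=
    fun p i j => mul_nonneg (hA i j) (Matrix.pow_apply_nonneg hA p j i)
  have hcoeff : ∀ p ∈ Icc 1 d, 0 < (p : ℝ) * c p :=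
    fun p hp => mul_pos (by exact_mod_cast (mem_Icc.1 hp).1) (hc p hp)
  have hentry : ∀ i j, hadamard A (gradh c A) i j = 0 ↔
      ∀ p ∈ Icc 1 d, A i j * (A ^ (p - 1)) j i = 0 := by
    intro i j
    rw [hadamard_gradh_apply, sum_eq_zero_iff_of_nonneg
      fun p hp => mul_nonneg (hcoeff p hp).le (hterm _ i j)]
    exact forall₂_congr fun p hp => mul_eq_zero_iff_left (hcoeff p hp).ne'
  have hdiag : ∀ p ∈ Icc 1 d, ∀ i, (A ^ p) i i = 0 ↔ ∀ j, A i j * (A ^ (p - 1)) j i = 0 :=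
    fun p hp i => by
      rw [A.pow_apply_eq_sum_mul_pow_pred (mem_Icc.1 hp).1,
        Fintype.sum_eq_zero_iff_of_nonneg fun j => hterm _ i j, funext_iff]
      rfl
  rw [← Matrix.ext_iff]
  simp only [Matrix.zero_apply, hentry, funext_iff, Matrix.diag_apply, Pi.zero_apply]
  exact ⟨fun h p hp i => (hdiag p hp i).2 fun j => h i j p hp,
    fun h i j p hp => (hdiag p hp i).1 (h p hp i) j⟩

end

theorem stmt9 {d : ℕ} (c : ℕ → ℝ) (hc : ∀ p ∈ Finset.Icc 1 d, 0 < c p)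
    (A : Matrix (Fin d) (Fin d) ℝ) (hA : ∀ i j, 0 ≤ A i j) :
    AcyclicA A ↔ Matrix.hadamard A (gradh c A) = 0 :=
  (acyclicA_iff_diag_pow_eq_zero hA).trans
    (hadamard_gradh_eq_zero_iff_diag_pow_eq_zero hc hA).symm
end

section
/- Let W satisfy h(W∘W) = 0 and let F be differentiable with ∇F(W) ≠ 0. Then for any α ≥ 0 and ρ ≥ 0, W is not a stationary point of the augmented Lagrangian L(W) = F(W) + α h(W∘W) + (ρ/2) h(W∘W)^2; i.e., ∇L(W) ≠ 0. -/
attribute [local instance] Matrix.frobeniusNormedAddCommGroup Matrix.frobeniusNormedSpace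

/-!
The penalty `α h(V∘V) + (ρ/2) h(V∘V)²` is nonnegative everywhere: `V∘V` has nonnegative
entries, hence so do its powers and their traces, and every `c_p` is positive. At a feasible `W`
it vanishes, so `W` minimizes the penalty and its derivative there is zero. Hence
`∇L(W) = ∇F(W) ≠ 0`.
-/

open Matrix

theorem Matrix.differentiable_hadamard_self {𝕜 m n : Type*} [NontriviallyNormedField 𝕜]
    [CompleteSpace 𝕜] [Fintype m] [Fintype n] :
    Differentiable 𝕜 fun V : Matrix m n 𝕜 => V ⊙ V := by
  let B : Matrix m n 𝕜 →L[𝕜] Matrix m n 𝕜 →L[𝕜] Matrix m n 𝕜 :=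
    (LinearMap.mk₂ 𝕜 hadamard (fun B C A => add_hadamard A B C)
      (fun k A B => smul_hadamard A B k) (fun A B C => hadamard_add A B C)
      (fun k A B => hadamard_smul A B k)).toContinuousBilinearMap
  exact fun V => (B.hasFDerivAt_of_bilinear (hasFDerivAt_id V) (hasFDerivAt_id V)).differentiableAt

section

attribute [local instance] Matrix.frobeniusNormedRing Matrix.frobeniusNormedAlgebra

theorem differentiable_hsum {d : ℕ} (c : ℕ → ℝ) : Differentiable ℝ (hsum (d := d) c) := by
  have htrace : Differentiable ℝ (trace : Matrix (Fin d) (Fin d) ℝ → ℝ) :=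
    (traceLinearMap (Fin d) ℝ ℝ).toContinuousLinearMap.differentiable
  unfold hsum
  exact Differentiable.fun_sum fun p _ => ((htrace.comp (differentiable_pow p)).const_mul (c p))

end

theorem hsum_hadamard_self_nonneg {d : ℕ} {c : ℕ → ℝ} (hc : ∀ p ∈ Finset.Icc 1 d, 0 < c p)
    (V : Matrix (Fin d) (Fin d) ℝ) : 0 ≤ hsum c (V ⊙ V) :=
  Finset.sum_nonneg fun p hp => mul_nonneg (hc p hp).le <| Finset.sum_nonneg fun i _ =>
    pow_apply_nonneg (fun i j => mul_self_nonneg (V i j)) p i i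

theorem isLocalMin_penalty {E : Type*} [TopologicalSpace E] {g : E → ℝ} {x : E}
    (hg : ∀ y, 0 ≤ g y) (hx : g x = 0) {α ρ : ℝ} (hα : 0 ≤ α) (hρ : 0 ≤ ρ) :
    IsLocalMin (fun y => α * g y + ρ / 2 * g y ^ 2) x :=
  Filter.Eventually.of_forall fun y => by
    have := hg y
    simp only [hx, mul_zero, zero_pow two_ne_zero, add_zero]
    positivity

theorem fderiv_add_of_isLocalMin {E : Type*} [NormedAddCommGroup E] [NormedSpace ℝ E]
    {F G : E → ℝ} {x : E} (hF : DifferentiableAt ℝ F x) (hG : DifferentiableAt ℝ G x)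
    (hmin : IsLocalMin G x) : fderiv ℝ (fun y => F y + G y) x = fderiv ℝ F x := by
  rw [fderiv_fun_add hF hG, hmin.fderiv_eq_zero, add_zero]

theorem stmt12 {d : ℕ} (c : ℕ → ℝ) (hc : ∀ p ∈ Finset.Icc 1 d, 0 < c p)
    (F : Matrix (Fin d) (Fin d) ℝ → ℝ) (W : Matrix (Fin d) (Fin d) ℝ)
    (hF : DifferentiableAt ℝ F W)
    (hfeas : hsum c (Matrix.hadamard W W) = 0)
    (hgrad : fderiv ℝ F W ≠ 0)
    (α ρ : ℝ) (hα : 0 ≤ α) (hρ : 0 ≤ ρ) :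
    fderiv ℝ (fun V => F V + α * hsum c (Matrix.hadamard V V) +
      ρ / 2 * (hsum c (Matrix.hadamard V V)) ^ 2) W ≠ 0 := by
  have hh : DifferentiableAt ℝ (fun V => hsum c (V ⊙ V)) W :=
    (differentiable_hsum c).comp differentiable_hadamard_self W
  have hpenalty : DifferentiableAt ℝ
      (fun V => α * hsum c (V ⊙ V) + ρ / 2 * hsum c (V ⊙ V) ^ 2) W :=
    (hh.const_mul α).add ((hh.pow 2).const_mul (ρ / 2))
  simp_rw [add_assoc]
  have hL := fderiv_add_of_isLocalMin hF hpenalty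
    (isLocalMin_penalty (hsum_hadamard_self_nonneg hc) hfeas hα hρ)
  exact hL ▸ hgrad
end

section
/- Let A be a nonnegative d×d matrix, fix indices i ≠ j, and let A' agree with A in all entries except possibly entries in column j (i.e., A'_{kj} may differ from A_{kj} for any k, all other entries equal). If (∇h(A))_{ij} > 0 then (∇h(A'))_{ij} > 0, and if (∇h(A))_{ij} = 0 then (∇h(A'))_{ij} = 0. -/
open Matrix

section Aux

variable {d : ℕ}

lemma exists_pos_of_sum_pos {ι : Type*} {s : Finset ι} {f : ι → ℝ}
    (h : 0 < ∑ k ∈ s, f k) : ∃ k ∈ s, 0 < f k := by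
  by_contra h'
  push_neg at h'
  exact absurd (Finset.sum_nonpos h') (not_le.mpr h)

lemma pow_entry_nonneg_s15 {M : Matrix (Fin d) (Fin d) ℝ} (hM : ∀ a b, 0 ≤ M a b) :
    ∀ n a b, 0 ≤ (M ^ n) a b := by
  intro n
  induction n with
  | zero =>
      intro a b
      simp only [pow_zero]
      by_cases h : a = b
      · simp [h, Matrix.one_apply]
      · simp [Matrix.one_apply, h]
  | succ n ih =>
      intro a b
      rw [pow_succ, Matrix.mul_apply]
      exact Finset.sum_nonneg fun k _ => mul_nonneg (ih a k) (hM k b)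

lemma pow_entry_mono {M N : Matrix (Fin d) (Fin d) ℝ}
    (hM : ∀ a b, 0 ≤ M a b) (hMN : ∀ a b, M a b ≤ N a b) :
    ∀ n a b, (M ^ n) a b ≤ (N ^ n) a b := by
  have hN : ∀ a b, 0 ≤ N a b := fun a b => (hM a b).trans (hMN a b)
  intro n
  induction n with
  | zero => intro a b; simp
  | succ n ih =>
      intro a b
      rw [pow_succ, pow_succ, Matrix.mul_apply, Matrix.mul_apply]
      refine Finset.sum_le_sum fun k _ => ?_
      exact mul_le_mul (ih a k) (hMN k b) (hM k b) (pow_entry_nonneg_s15 hN n a k)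

/-- If there is a positive walk (in `A`) from `j` to `k ≠ j` of length `n`, then there is
one of length `m ≤ n`, `m ≥ 1`, that never uses an edge into `j` (matrix `B` with column `j`
zeroed out). -/
lemma keyL {A : Matrix (Fin d) (Fin d) ℝ} (hA : ∀ a b, 0 ≤ A a b) (j : Fin d) :
    ∀ n (k : Fin d), k ≠ j → 0 < (A ^ n) j k →
      ∃ m, 1 ≤ m ∧ m ≤ n ∧
        0 < ((Matrix.of fun a b => if b = j then (0 : ℝ) else A a b) ^ m) j k := by
  set B : Matrix (Fin d) (Fin d) ℝ := Matrix.of fun a b => if b = j then (0 : ℝ) else A a b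
    with hB
  have hBnn : ∀ a b, 0 ≤ B a b := by
    intro a b
    by_cases hb : b = j
    · simp [hB, hb]
    · simpa [hB, hb] using hA a b
  intro n
  induction n with
  | zero =>
      intro k hk h
      exfalso
      rw [pow_zero, Matrix.one_apply_ne (Ne.symm hk)] at h
      exact lt_irrefl 0 h
  | succ n ih =>
      intro k hk h
      rw [pow_succ, Matrix.mul_apply] at h
      obtain ⟨k', _, hk'pos⟩ := exists_pos_of_sum_pos h
      have h1 : 0 < (A ^ n) j k' ∧ 0 < A k' k := by
        rcases mul_pos_iff.mp hk'pos with h' | h'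
        · exact h'
        · exact absurd h'.1 (not_lt.mpr (pow_entry_nonneg_s15 hA n j k'))
      have hBk'k : B k' k = A k' k := by simp [hB, hk]
      by_cases hkj : k' = j
      · refine ⟨1, le_refl 1, Nat.one_le_iff_ne_zero.mpr (Nat.succ_ne_zero n), ?_⟩
        rw [pow_one]
        have : B j k = A j k := by simp [hB, hk]
        rw [this, ← hkj]
        exact h1.2
      · obtain ⟨m, hm1, hmn, hmpos⟩ := ih k' hkj h1.1
        refine ⟨m + 1, Nat.le_add_left 1 m, Nat.succ_le_succ hmn, ?_⟩
        rw [pow_succ, Matrix.mul_apply]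
        refine Finset.sum_pos' (fun t _ => mul_nonneg (pow_entry_nonneg_s15 hBnn m j t) (hBnn t k))
          ⟨k', Finset.mem_univ k', ?_⟩
        rw [hBk'k]
        exact mul_pos hmpos h1.2

lemma gradh_apply (c : ℕ → ℝ) (A : Matrix (Fin d) (Fin d) ℝ) (i j : Fin d) :
    gradh c A i j = ∑ p ∈ Finset.Icc 1 d, ((p : ℝ) * c p) * (A ^ (p - 1)) j i := by
  simp only [gradh, Matrix.sum_apply, Matrix.smul_apply, Matrix.transpose_apply, smul_eq_mul]

lemma gradh_nonneg {c : ℕ → ℝ} (hc : ∀ p ∈ Finset.Icc 1 d, 0 < c p)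
    {A : Matrix (Fin d) (Fin d) ℝ} (hA : ∀ i j, 0 ≤ A i j) (i j : Fin d) :
    0 ≤ gradh c A i j := by
  rw [gradh_apply]
  refine Finset.sum_nonneg fun p hp => mul_nonneg (mul_nonneg ?_ (hc p hp).le)
    (pow_entry_nonneg_s15 hA _ j i)
  positivity

lemma gradh_pos_imp {c : ℕ → ℝ} (hc : ∀ p ∈ Finset.Icc 1 d, 0 < c p)
    {A A' : Matrix (Fin d) (Fin d) ℝ}
    (hA : ∀ i j, 0 ≤ A i j) (hA' : ∀ i j, 0 ≤ A' i j)
    {i j : Fin d} (hij : i ≠ j)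
    (hagree : ∀ k l, l ≠ j → A' k l = A k l) :
    0 < gradh c A i j → 0 < gradh c A' i j := by
  intro h
  rw [gradh_apply] at h
  obtain ⟨p, hp, hppos⟩ := exists_pos_of_sum_pos h
  have hppos' : 0 < (A ^ (p - 1)) j i := by
    rcases mul_pos_iff.mp hppos with h' | h'
    · exact h'.2
    · exact absurd h'.2 (not_lt.mpr (pow_entry_nonneg_s15 hA _ j i))
  obtain ⟨m, hm1, hmn, hmpos⟩ := keyL hA j (p - 1) i hij hppos'
  set B : Matrix (Fin d) (Fin d) ℝ := Matrix.of fun a b => if b = j then (0 : ℝ) else A a b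
    with hB
  have hBnn : ∀ a b, 0 ≤ B a b := by
    intro a b
    by_cases hb : b = j
    · simp [hB, hb]
    · simpa [hB, hb] using hA a b
  have hBA' : ∀ a b, B a b ≤ A' a b := by
    intro a b
    by_cases hb : b = j
    · simpa [hB, hb] using hA' a b
    · simp only [hB, Matrix.of_apply, if_neg hb]
      exact (hagree a b hb).ge
  have hA'pos : 0 < (A' ^ m) j i := lt_of_lt_of_le hmpos (pow_entry_mono hBnn hBA' m j i)
  have hp' : m + 1 ∈ Finset.Icc 1 d := by
    simp only [Finset.mem_Icc] at hp ⊢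
    omega
  rw [gradh_apply]
  refine Finset.sum_pos' (fun q hq => mul_nonneg (mul_nonneg (by positivity) (hc q hq).le)
    (pow_entry_nonneg_s15 hA' _ j i)) ⟨m + 1, hp', ?_⟩
  have hcpos : 0 < ((m + 1 : ℕ) : ℝ) * c (m + 1) := by
    have := hc (m + 1) hp'
    positivity
  have hpow : (m + 1) - 1 = m := Nat.succ_sub_one m
  rw [hpow]
  exact mul_pos hcpos hA'pos

end Aux

theorem stmt15 {d : ℕ} (c : ℕ → ℝ) (hc : ∀ p ∈ Finset.Icc 1 d, 0 < c p)
    (A A' : Matrix (Fin d) (Fin d) ℝ)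
    (hA : ∀ i j, 0 ≤ A i j) (hA' : ∀ i j, 0 ≤ A' i j)
    (i j : Fin d) (hij : i ≠ j)
    (hagree : ∀ k l, l ≠ j → A' k l = A k l) :
    (0 < gradh c A i j → 0 < gradh c A' i j) ∧
    (gradh c A i j = 0 → gradh c A' i j = 0) := by
  constructor
  · exact gradh_pos_imp hc hA hA' hij hagree
  · intro h0
    by_contra hne
    have hpos : 0 < gradh c A' i j :=
      lt_of_le_of_ne (gradh_nonneg hc hA' i j) (Ne.symm hne)
    have : 0 < gradh c A i j :=
      gradh_pos_imp hc hA' hA hij (fun k l hl => (hagree k l hl).symm) hpos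
    rw [h0] at this
    exact lt_irrefl 0 this
end

section
/- Consider the feasible set S = {(W⁺, W⁻) : W⁺ ≥ 0, W⁻ ≥ 0, h(W⁺+W⁻) ≤ 0}. At any feasible point, the gradient of the constraint h(W⁺+W⁻) ≤ 0 (with respect to W⁺, equal to ∇h(A) where A = W⁺+W⁻) is a nonnegative linear combination of the gradients of those active nonnegativity constraints W⁺_{ij} ≥ 0 with (∇h(A))_{ij} > 0; in particular the gradients of the active constraints are linearly dependent, so no feasible point is regular. -/
/-!
For an entrywise nonnegative `A`, every `tr(A^p)` is nonnegative, so `h(A) ≤ 0` with positive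
weights forces `tr(A^p) = 0` for `1 ≤ p ≤ d`. Expanding `tr(A^p) = Σ_{i,j} (A^{p-1})_{ji} A_{ij}`
as a sum of nonnegative terms gives `(A^{p-1})_{ji} A_{ij} = 0`, hence the complementarity
`(∇h(A))_{ij} A_{ij} = 0`. Since `∇h(A)` is itself nonnegative, it is the combination
`Σ (∇h(A))_{ij} E^{ij}` of the gradients `E^{ij}` of the active constraints with
`(∇h(A))_{ij} > 0`, which is a linear dependence among the active gradients.
-/

open Matrix

theorem not_linearIndependent_option_elim_of_mem_span {K V ι : Type*} [DivisionRing K]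
    [AddCommGroup V] [Module K V] {v : ι → V} {x : V}
    (hx : x ∈ Submodule.span K (Set.range v)) :
    ¬ LinearIndependent K (fun o : Option ι => o.elim x v) := by
  have hcases : (fun o : Option ι => o.elim x v) = fun o => Option.casesOn' o x v := by
    funext o
    cases o <;> rfl
  rw [hcases, linearIndependent_option']
  exact fun h => h.2 hx

namespace Matrix

section OrderedSemiring

variable {n R : Type*} [Fintype n] [DecidableEq n] [Semiring R] [PartialOrder R]
  [IsOrderedRing R] {A : Matrix n n R}

theorem trace_pow_nonneg (hA : ∀ i j, 0 ≤ A i j) (p : ℕ) : 0 ≤ (A ^ p).trace :=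
  Finset.sum_nonneg fun i _ => pow_apply_nonneg hA p i i

theorem pow_apply_mul_apply_eq_zero_of_trace_pow_succ_eq_zero (hA : ∀ i j, 0 ≤ A i j)
    {m : ℕ} (htr : (A ^ (m + 1)).trace = 0) (i j : n) : (A ^ m) j i * A i j = 0 := by
  have hterm : ∀ k l, 0 ≤ (A ^ m) k l * A l k := fun k l =>
    mul_nonneg (pow_apply_nonneg hA m k l) (hA l k)
  have hrow : ∀ k, 0 ≤ ∑ l, (A ^ m) k l * A l k := fun k =>
    Finset.sum_nonneg fun l _ => hterm k l
  simp only [pow_succ, trace, diag_apply, mul_apply] at htr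
  have hrow_j := (Finset.sum_eq_zero_iff_of_nonneg fun k _ => hrow k).mp htr j
    (Finset.mem_univ j)
  exact (Finset.sum_eq_zero_iff_of_nonneg fun l _ => hterm j l).mp hrow_j i (Finset.mem_univ i)

end OrderedSemiring

theorem eq_sum_smul_single {m n α : Type*} [Fintype m] [Fintype n] [DecidableEq m]
    [DecidableEq n] [Semiring α] (M : Matrix m n α) :
    M = ∑ q : m × n, M q.1 q.2 • single q.1 q.2 (1 : α) := by
  simp_rw [smul_single, smul_eq_mul, mul_one, Fintype.sum_prod_type]
  exact matrix_eq_sum_single M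

theorem mem_span_range_single_of_nonneg {m n R : Type*} [Fintype m] [Fintype n]
    [DecidableEq m] [DecidableEq n] [Semiring R] [PartialOrder R] {M : Matrix m n R}
    (hM : ∀ i j, 0 ≤ M i j) :
    M ∈ Submodule.span R
      (Set.range fun q : {q : m × n // 0 < M q.1 q.2} => single q.1.1 q.1.2 (1 : R)) := by
  have hsum : ∑ q : m × n, M q.1 q.2 • single q.1 q.2 (1 : R) ∈ Submodule.span R
      (Set.range fun q : {q : m × n // 0 < M q.1 q.2} => single q.1.1 q.1.2 (1 : R)) := by
    refine Submodule.sum_mem _ fun q _ => ?_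
    rcases (hM q.1 q.2).eq_or_lt with hzero | hpos
    · rw [← hzero, zero_smul]
      exact Submodule.zero_mem _
    · exact Submodule.smul_mem _ _ (Submodule.subset_span ⟨⟨q, hpos⟩, rfl⟩)
  rwa [← eq_sum_smul_single] at hsum

end Matrix

section Acyclicity

variable {d : ℕ} {c : ℕ → ℝ} {A : Matrix (Fin d) (Fin d) ℝ}

theorem trace_pow_eq_zero_of_hsum_nonpos (hc : ∀ p ∈ Finset.Icc 1 d, 0 < c p)
    (hA : ∀ i j, 0 ≤ A i j) (h : hsum c A ≤ 0) {p : ℕ} (hp : p ∈ Finset.Icc 1 d) :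
    (A ^ p).trace = 0 := by
  have hterm : ∀ p ∈ Finset.Icc 1 d, 0 ≤ c p * (A ^ p).trace := fun p hp =>
    mul_nonneg (hc p hp).le (trace_pow_nonneg hA p)
  have hzero : hsum c A = 0 := h.antisymm (Finset.sum_nonneg hterm)
  exact ((mul_eq_zero.mp ((Finset.sum_eq_zero_iff_of_nonneg hterm).mp hzero p hp)).resolve_left
    (hc p hp).ne')

theorem gradh_apply_nonneg (hc : ∀ p ∈ Finset.Icc 1 d, 0 ≤ c p) (hA : ∀ i j, 0 ≤ A i j)
    (i j : Fin d) : 0 ≤ gradh c A i j := by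
  rw [gradh, Matrix.sum_apply]
  refine Finset.sum_nonneg fun p hp => ?_
  rw [Matrix.smul_apply, transpose_apply, smul_eq_mul]
  exact mul_nonneg (mul_nonneg p.cast_nonneg (hc p hp)) (pow_apply_nonneg hA _ _ _)

theorem gradh_apply_mul_apply_eq_zero (hc : ∀ p ∈ Finset.Icc 1 d, 0 < c p)
    (hA : ∀ i j, 0 ≤ A i j) (h : hsum c A ≤ 0) (i j : Fin d) :
    gradh c A i j * A i j = 0 := by
  rw [gradh, Matrix.sum_apply, Finset.sum_mul]
  refine Finset.sum_eq_zero fun p hp => ?_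
  obtain ⟨m, rfl⟩ := Nat.exists_eq_add_of_le' (Finset.mem_Icc.mp hp).1
  rw [Matrix.smul_apply, transpose_apply, smul_eq_mul, mul_assoc, Nat.add_sub_cancel,
    pow_apply_mul_apply_eq_zero_of_trace_pow_succ_eq_zero hA
      (trace_pow_eq_zero_of_hsum_nonpos hc hA h hp), mul_zero]

end Acyclicity

theorem stmt19 {d : ℕ} (c : ℕ → ℝ) (hc : ∀ p ∈ Finset.Icc 1 d, 0 < c p)
    (Wp Wm : Matrix (Fin d) (Fin d) ℝ)
    (hWp : ∀ i j, 0 ≤ Wp i j) (hWm : ∀ i j, 0 ≤ Wm i j)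
    (hfeas : hsum c (Wp + Wm) ≤ 0) :
    (∃ μ : Fin d × Fin d → ℝ, (∀ q, 0 ≤ μ q) ∧
      (∀ q, μ q ≠ 0 → 0 < gradh c (Wp + Wm) q.1 q.2) ∧
      (∀ q : Fin d × Fin d, 0 < gradh c (Wp + Wm) q.1 q.2 →
        Wp q.1 q.2 = 0 ∧ Wm q.1 q.2 = 0) ∧
      gradh c (Wp + Wm) =
        ∑ q : Fin d × Fin d, μ q • Matrix.single q.1 q.2 (1 : ℝ)) ∧
    ¬ LinearIndependent ℝ
      (fun o : Option {q : Fin d × Fin d // 0 < gradh c (Wp + Wm) q.1 q.2} =>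
        o.elim (gradh c (Wp + Wm))
          (fun q => Matrix.single q.1.1 q.1.2 (1 : ℝ))) := by
  have hA : ∀ i j, 0 ≤ (Wp + Wm) i j := fun i j => add_nonneg (hWp i j) (hWm i j)
  have hgrad := gradh_apply_nonneg (fun p hp => (hc p hp).le) hA
  have hactive (q : Fin d × Fin d) (hq : 0 < gradh c (Wp + Wm) q.1 q.2) :
      Wp q.1 q.2 = 0 ∧ Wm q.1 q.2 = 0 :=
    (add_eq_zero_iff_of_nonneg (hWp q.1 q.2) (hWm q.1 q.2)).mp
      ((mul_eq_zero.mp (gradh_apply_mul_apply_eq_zero hc hA hfeas q.1 q.2)).resolve_left hq.ne')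
  refine ⟨⟨fun q => gradh c (Wp + Wm) q.1 q.2, fun q => hgrad q.1 q.2,
    fun q hq => (hgrad q.1 q.2).lt_of_ne' hq, hactive, eq_sum_smul_single _⟩, ?_⟩
  exact not_linearIndependent_option_elim_of_mem_span (mem_span_range_single_of_nonneg hgrad)
end
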